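/- arXiv:2602.05219 — 3 statements merged into one kernel-verified Lean document; each statement's English description precedes it below -/
import Mathlib

section
/- If a set system (X,R) has VC dimension d and S is a finite subset of X of size n, then the number of distinct intersections {S ∩ r : r ∈ R} is at most the sum over i=0..d of binomial(n,i). -/
open Finset in
/-- Sauer–Shelah for set systems: if `(X,R)` has VC dimension `d`
(every shattered finite subset has size `≤ d`), then for any finite `S ⊆ X` of size `n`,
the number of distinct traces `{S ∩ r : r ∈ R}` is at most `∑ i ≤ d, choose n i`. -/
theorem stmt0 {X : Type*} (R : Set (Set X)) (d : ℕ)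
    (hVC : ∀ A : Finset X,
      {s : Set X | ∃ r ∈ R, s = (A : Set X) ∩ r}.ncard = 2 ^ A.card → A.card ≤ d)
    (S : Finset X) :
    {s : Set X | ∃ r ∈ R, s = (S : Set X) ∩ r}.ncard ≤
      ∑ i ∈ Finset.range (d + 1), (S.card).choose i := by
  classical
  set T : Set (Set X) := {s : Set X | ∃ r ∈ R, s = (S : Set X) ∩ r} with hT
  have hTfin : T.Finite := by
    refine Set.Finite.subset (S.finite_toSet.finite_subsets) ?_
    rintro t ⟨r, -, rfl⟩
    exact Set.inter_subset_left
  set f : Set X → Finset X := fun t => S.filter (· ∈ t) with hf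
  have hfcoe : ∀ t ∈ T, (f t : Set X) = t := by
    rintro t ⟨r, hr, rfl⟩
    ext x
    simp only [hf, Finset.coe_filter, Set.mem_setOf_eq, Set.mem_inter_iff, Finset.mem_coe]
    tauto
  set 𝒜 : Finset (Finset X) := hTfin.toFinset.image f with h𝒜
  have hcard : T.ncard = 𝒜.card := by
    have h1 : 𝒜.card = hTfin.toFinset.card := Finset.card_image_of_injOn (by
      intro a ha b hb hab
      simp only [Finset.mem_coe, Set.Finite.mem_toFinset] at ha hb
      rw [← hfcoe a ha, ← hfcoe b hb, hab])
    rw [h1, Set.ncard_eq_toFinset_card _ hTfin]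
  -- every set in the shatterer is small
  have hshat : ∀ s ∈ 𝒜.shatterer, s ⊆ S ∧ s.card ≤ d := by
    intro s hs
    have hsS : s ⊆ S := by
      rw [Finset.shatterer, Finset.mem_filter, Finset.mem_biUnion] at hs
      obtain ⟨⟨u, hu, hsu⟩, -⟩ := hs.imp_left id
      rw [Finset.mem_powerset] at hsu
      rw [h𝒜, Finset.mem_image] at hu
      obtain ⟨w, -, rfl⟩ := hu
      exact hsu.trans (Finset.filter_subset _ _)
    have hsh : 𝒜.Shatters s := Finset.mem_shatterer.1 hs
    refine ⟨hsS, hVC s ?_⟩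
    have hEq : {u : Set X | ∃ r ∈ R, u = (s : Set X) ∩ r} =
        ↑(s.powerset.image (fun t : Finset X => (t : Set X))) := by
      ext u
      simp only [Set.mem_setOf_eq, Finset.coe_image, Set.mem_image, Finset.mem_coe,
        Finset.mem_powerset]
      constructor
      · rintro ⟨r, hr, rfl⟩
        exact ⟨s.filter (· ∈ r), Finset.filter_subset _ _, by ext x; simp⟩
      · rintro ⟨t, hts, rfl⟩
        obtain ⟨u, hu, hsu⟩ := hsh hts
        rw [h𝒜, Finset.mem_image] at hu
        obtain ⟨w, hw, rfl⟩ := hu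
        rw [Set.Finite.mem_toFinset] at hw
        obtain ⟨r, hr, rfl⟩ := hw
        refine ⟨r, hr, ?_⟩
        rw [← hsu]
        ext x
        simp only [Set.mem_inter_iff, Finset.mem_coe, Finset.mem_inter, hf,
          Finset.mem_filter]
        have hx := @hsS x
        tauto
    rw [hEq, Set.ncard_coe_finset, Finset.card_image_of_injOn
      (Set.injOn_of_injective Finset.coe_injective), Finset.card_powerset]
  calc T.ncard = 𝒜.card := hcard
    _ ≤ 𝒜.shatterer.card := Finset.card_le_card_shatterer 𝒜
    _ ≤ ((Finset.range (d + 1)).biUnion (fun i => S.powersetCard i)).card := by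
        refine Finset.card_le_card ?_
        intro s hs
        obtain ⟨h1, h2⟩ := hshat s hs
        exact Finset.mem_biUnion.2 ⟨s.card, Finset.mem_range.2 (Nat.lt_succ_of_le h2),
          Finset.mem_powersetCard.2 ⟨h1, rfl⟩⟩
    _ ≤ ∑ i ∈ Finset.range (d + 1), (S.powersetCard i).card := Finset.card_biUnion_le
    _ = ∑ i ∈ Finset.range (d + 1), (S.card).choose i := by
        simp [Finset.card_powersetCard]
end

section
/- Let S be a finite multiset of pairs (a,w) with a ∈ ℝ^d, w ∈ ℝ, defining halfspace predicates h_{a,w}(x) = [⟨a,x⟩ ≥ w]. For every x ∈ ℝ^d, depth_S(x) ≥ (d+1)·cdepth_S(x) − d·|S|. -/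
/-- The number of halfspace predicates `h_{a,w}` in the multiset `S` satisfied by `x`,
i.e. with `⟨a,x⟩ ≥ w`. -/
noncomputable def depth {d : ℕ} (S : Multiset ((Fin d → ℝ) × ℝ)) (x : Fin d → ℝ) : ℕ :=
  Multiset.card (S.filter (fun p => p.2 ≤ ∑ i, p.1 i * x i))

/-- The convexification of `depth`:
`cdepth_S(x) = sup {y : x ∈ ConvexHull {z : depth_S(z) ≥ y}}`. -/
noncomputable def cdepth {d : ℕ} (S : Multiset ((Fin d → ℝ) × ℝ)) (x : Fin d → ℝ) : ℝ :=
  sSup {y : ℝ | x ∈ convexHull ℝ {z : Fin d → ℝ | y ≤ (depth S z : ℝ)}}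

lemma aux_card_filter_le {α E : Type*} [DecidableEq E] (t : Finset E) :
    ∀ (S : Multiset α) (P : α → Prop) [DecidablePred P]
      (Q : E → α → Prop) [∀ z, DecidablePred (Q z)],
      (∀ p ∈ S, P p → ∃ z ∈ t, Q z p) →
      Multiset.card (S.filter P) ≤ ∑ z ∈ t, Multiset.card (S.filter (Q z)) := by
  induction t using Finset.induction_on with
  | empty =>
    intro S P _ Q _ h
    have : S.filter P = 0 := Multiset.filter_eq_nil.2 (fun p hp hP => by simpa using h p hp hP)
    simp [this]
  | @insert a s ha ih =>
    intro S P _ Q _ h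
    rw [Finset.sum_insert ha]
    have hsplit := congrArg Multiset.card
      (Multiset.filter_add_not (Q a) (S.filter P))
    rw [Multiset.card_add] at hsplit
    have h1 : Multiset.card ((S.filter P).filter (Q a)) ≤ Multiset.card (S.filter (Q a)) :=
      Multiset.card_le_card (Multiset.filter_le_filter _ (Multiset.filter_le _ _))
    have h2 : Multiset.card ((S.filter P).filter (fun p => ¬ Q a p)) ≤
        ∑ z ∈ s, Multiset.card (S.filter (Q z)) := by
      rw [Multiset.filter_filter]
      apply ih S _ Q
      rintro p hp ⟨hna, hP⟩
      obtain ⟨z, hz, hq⟩ := h p hp hP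
      rcases Finset.mem_insert.1 hz with rfl | hz'
      · exact absurd hq hna
      · exact ⟨z, hz', hq⟩
    omega

lemma depth_le_card {d : ℕ} (S : Multiset ((Fin d → ℝ) × ℝ)) (x : Fin d → ℝ) :
    depth S x ≤ Multiset.card S :=
  Multiset.card_le_card (Multiset.filter_le _ _)

/-- For every finite multiset `S` of halfspace predicates over `ℝ^d` and
every `x ∈ ℝ^d`, `depth_S(x) ≥ (d+1)·cdepth_S(x) − d·|S|`. -/
theorem stmt4 {d : ℕ} (S : Multiset ((Fin d → ℝ) × ℝ)) (x : Fin d → ℝ) :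
    ((d + 1 : ℝ)) * cdepth S x - (d : ℝ) * (Multiset.card S : ℝ) ≤ (depth S x : ℝ) := by
  set n : ℝ := (Multiset.card S : ℝ) with hn
  have hsplit : ∀ z : Fin d → ℝ,
      (Multiset.card (S.filter (fun p => ¬ (p.2 ≤ ∑ i, p.1 i * z i))) : ℝ) = n - depth S z := by
    intro z
    have hc : depth S z +
        Multiset.card (S.filter (fun p => ¬ (p.2 ≤ ∑ i, p.1 i * z i))) = Multiset.card S := by
      unfold depth
      rw [← Multiset.card_add, Multiset.filter_add_not]
    have := congrArg (fun m : ℕ => (m : ℝ)) hc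
    push_cast at this
    rw [hn]
    linarith
  have hkey : ∀ y ∈ {y : ℝ | x ∈ convexHull ℝ {z : Fin d → ℝ | y ≤ (depth S z : ℝ)}},
      y ≤ ((depth S x : ℝ) + d * n) / (d + 1) := by
    intro y hy
    simp only [Set.mem_setOf_eq] at hy
    rw [convexHull_eq_union] at hy
    simp only [Set.mem_iUnion, exists_prop] at hy
    obtain ⟨t, hts, hai, hxt⟩ := hy
    have htne : t.Nonempty := by
      rcases t.eq_empty_or_nonempty with rfl | h
      · simp at hxt
      · exact h
    have hcard : (t.card : ℝ) ≤ (d : ℝ) + 1 := by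
      have h1 := hai.card_le_finrank_succ
      have h2 : Module.finrank ℝ (vectorSpan ℝ (Set.range ((↑) : t → (Fin d → ℝ)))) ≤ d := by
        have := Submodule.finrank_le (vectorSpan ℝ (Set.range ((↑) : t → (Fin d → ℝ))))
        simpa [Module.finrank_fin_fun] using this
      have h3 := h1.trans (Nat.add_le_add_right h2 1)
      rw [Fintype.card_coe] at h3
      exact_mod_cast h3
    have hcover : ∀ p ∈ S, ¬ (p.2 ≤ ∑ i, p.1 i * x i) →
        ∃ z ∈ t, ¬ (p.2 ≤ ∑ i, p.1 i * z i) := by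
      intro p _ hpx
      by_contra hcon
      push_neg at hcon
      apply hpx
      have hlin : IsLinearMap ℝ (fun z : Fin d → ℝ => ∑ i, p.1 i * z i) := by
        constructor
        · intro a b; simp [mul_add, Finset.sum_add_distrib]
        · intro c a; simp [Finset.mul_sum, mul_left_comm]
      have hconv : Convex ℝ {z : Fin d → ℝ | p.2 ≤ ∑ i, p.1 i * z i} :=
        convex_halfSpace_ge hlin p.2
      exact convexHull_min (fun z hz => hcon z hz) hconv hxt
    have hmain := aux_card_filter_le t S (fun p => ¬ (p.2 ≤ ∑ i, p.1 i * x i))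
      (fun z p => ¬ (p.2 ≤ ∑ i, p.1 i * z i)) hcover
    have hz : ∀ z ∈ t, y ≤ (depth S z : ℝ) := fun z hzt => hts hzt
    have hyn : y ≤ n := by
      obtain ⟨z, hzt⟩ := htne
      refine (hz z hzt).trans ?_
      rw [hn]
      exact_mod_cast depth_le_card S z
    have hsum : ∑ z ∈ t, (Multiset.card (S.filter (fun p => ¬ (p.2 ≤ ∑ i, p.1 i * z i))) : ℝ)
        ≤ (t.card : ℝ) * (n - y) := by
      rw [← nsmul_eq_mul]
      apply Finset.sum_le_card_nsmul
      intro z hzt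
      rw [hsplit z]
      linarith [hz z hzt]
    have h1 : n - (depth S x : ℝ) ≤ (t.card : ℝ) * (n - y) := by
      rw [← hsplit x]
      refine le_trans ?_ hsum
      exact_mod_cast hmain
    have h2 : (t.card : ℝ) * (n - y) ≤ ((d : ℝ) + 1) * (n - y) :=
      mul_le_mul_of_nonneg_right hcard (by linarith)
    rw [le_div_iff₀ (by positivity)]
    nlinarith [h1.trans h2]
  have hnn : (0:ℝ) ≤ ((depth S x : ℝ) + d * n) / (d + 1) := by positivity
  have hfin := Real.sSup_le hkey hnn
  unfold cdepth
  rw [le_div_iff₀ (by positivity : (0:ℝ) < (d:ℝ)+1)] at hfin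
  nlinarith [hfin]
end

section
/- Suppose each of k independent mechanisms M_1,…,M_k is (ε,δ)-differentially private with ε < 1/√k. Then the composed mechanism S ↦ (M_1(S),…,M_k(S)) is (ε', kδ + δ')-differentially private where ε' = √(2k·ln(1/δ'))·ε + kε·(e^ε − 1)/(e^ε + 1), for every δ' > 0. -/
/-!
Write `P i = M i S` and `Q i = M i S'` for neighbouring `S`, `S'`, and take densities `p i`, `q i`
with respect to `P i + Q i`. Each `p i` splits as `e^{L i} q̃ i + u i`, where the privacy loss
`L i` takes values in `[-ε, ε]`, `q̃ i ≤ q i` satisfies `∫ e^{L i} q̃ i ≤ ∫ q̃ i`, and the excess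
`u i` has mass at most `δ`. Expanding the product `∏ (e^{L i} q̃ i + u i)` costs at most `k δ` in
total. The remaining part is compared with `∏ q i` by a Chernoff bound in the total loss `∑ L i`:
convexity of `t ↦ t^{1+λ}` on `[e^{-ε}, e^ε]` reduces `E[e^{λ L i}]` to a two-point distribution
of mean at most `ε (e^ε - 1)/(e^ε + 1)`, and Hoeffding's lemma bounds it by
`exp (λ ε (e^ε - 1)/(e^ε + 1) + λ² ε²/2)`. The choice `λ = √(2 k log (1/δ')) / (k ε)` makes the
Chernoff term equal to `δ'`.
-/

open MeasureTheory ProbabilityTheory Real Set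
open scoped ENNReal NNReal

lemma rpow_le_secant {a b t s : ℝ} (ha : 0 ≤ a) (hab : a < b) (hs : 1 ≤ s) (ht : t ∈ Icc a b) :
    t ^ s ≤ a ^ s + (b ^ s - a ^ s) / (b - a) * (t - a) := by
  have hba : 0 < b - a := sub_pos.2 hab
  have key := (convexOn_rpow hs).2 (mem_Ici.2 ha) (mem_Ici.2 (ha.trans hab.le))
    (div_nonneg (sub_nonneg.2 ht.2) hba.le) (div_nonneg (sub_nonneg.2 ht.1) hba.le)
    (by field_simp; ring)
  have ht' : (b - t) / (b - a) * a + (t - a) / (b - a) * b = t := by field_simp; ring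
  simp only [smul_eq_mul, ht'] at key
  calc t ^ s ≤ (b - t) / (b - a) * a ^ s + (t - a) / (b - a) * b ^ s := key
    _ = _ := by field_simp; ring

lemma mul_exp_add_one_sub_mul_exp_neg_le {w h : ℝ} (hw0 : 0 ≤ w) (hw1 : w ≤ 1) :
    w * exp h + (1 - w) * exp (-h) ≤ exp ((2 * w - 1) * h + h ^ 2 / 2) := by
  set ν : Measure ℝ :=
    ENNReal.ofReal w • Measure.dirac h + ENNReal.ofReal (1 - w) • Measure.dirac (-h)
  have : IsProbabilityMeasure ν := ⟨by simp [ν, ← ENNReal.ofReal_add hw0 (sub_nonneg.2 hw1)]⟩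
  have hint : ∀ f : ℝ → ℝ, ∫ x, f x ∂ν = w * f h + (1 - w) * f (-h) := by
    intro f
    rw [integral_add_measure, integral_smul_measure, integral_smul_measure, integral_dirac,
      integral_dirac]
    · simp [hw0, hw1]
    all_goals exact (integrable_dirac enorm_lt_top).smul_measure ENNReal.ofReal_ne_top
  have hbdd : ∀ᵐ x ∂ν, x ∈ Icc (-|h|) |h| :=
    ae_add_measure_iff.2
      ⟨Measure.ae_smul_measure ((ae_dirac_iff measurableSet_Icc).2 ⟨neg_abs_le h, le_abs_self h⟩) _,
        Measure.ae_smul_measure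
          ((ae_dirac_iff measurableSet_Icc).2 ⟨neg_le_neg (le_abs_self h), neg_le_abs h⟩) _⟩
  have hmgf := (hasSubgaussianMGF_of_mem_Icc aemeasurable_id hbdd).mgf_le 1
  rw [mgf, hint, hint] at hmgf
  have hc : (((‖|h| - -|h|‖₊ / 2) ^ 2 : ℝ≥0) : ℝ) * 1 ^ 2 / 2 = h ^ 2 / 2 := by
    push_cast
    rw [sub_neg_eq_add, Real.norm_of_nonneg (by positivity)]
    ring_nf
    rw [sq_abs]
  rw [hc] at hmgf
  simp only [id, one_mul] at hmgf
  calc w * exp h + (1 - w) * exp (-h)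
      = (w * exp (h - (w * h + (1 - w) * -h)) + (1 - w) * exp (-h - (w * h + (1 - w) * -h)))
        * exp ((2 * w - 1) * h) := by
        rw [add_mul, mul_assoc, mul_assoc, ← exp_add, ← exp_add]; ring_nf
    _ ≤ exp (h ^ 2 / 2) * exp ((2 * w - 1) * h) := by gcongr
    _ = exp ((2 * w - 1) * h + h ^ 2 / 2) := by rw [← exp_add]; ring_nf

/-- Hoeffding's bound on `E[e^{l L}]` for a privacy loss `L ∈ [-ε, ε]` with `E[e^L] ≤ 1`. -/
noncomputable def lossMGFBound (ε l : ℝ) : ℝ :=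
  exp (l * (ε * (exp ε - 1) / (exp ε + 1)) + l ^ 2 * ε ^ 2 / 2)

/-- The secant of `t ↦ t ^ (1 + l)` over `[e^{-ε}, e^ε]`, written around `t = 1`: its value at `1`
is the moment generating function of a two-point law, bounded by Hoeffding's lemma. -/
lemma exists_affine_majorant_rpow_one_add {ε l : ℝ} (hε : 0 < ε) (hl : 0 ≤ l) :
    ∃ c : ℝ, 0 ≤ c ∧ ∀ t ∈ Icc (exp (-ε)) (exp ε),
      t ^ (1 + l) + c ≤ lossMGFBound ε l + c * t := by
  have hAB : exp (-ε) < exp ε := exp_lt_exp.2 (by linarith)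
  set c := (exp ε ^ (1 + l) - exp (-ε) ^ (1 + l)) / (exp ε - exp (-ε))
  have hc : 0 ≤ c := div_nonneg (sub_nonneg.2 (rpow_le_rpow (exp_pos _).le hAB.le (by linarith)))
    (sub_nonneg.2 hAB.le)
  refine ⟨c, hc, fun t ht => ?_⟩
  have hsec := rpow_le_secant (s := 1 + l) (exp_pos _).le hAB (by linarith) ht
  set w := exp ε / (exp ε + 1)
  have hw0 : 0 ≤ w := by positivity
  have hw1 : w ≤ 1 := (div_le_one (by positivity)).2 (by linarith)
  have hsec1 : exp (-ε) ^ (1 + l) + c * (1 - exp (-ε)) =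
      w * exp (l * ε) + (1 - w) * exp (-(l * ε)) := by
    have hpow : ∀ x, exp x ^ (1 + l) = exp x * exp (l * x) := fun x => by
      rw [← exp_mul, ← exp_add]; ring_nf
    have hu : 1 < exp ε := one_lt_exp_iff.2 hε
    have hsub : exp ε - (exp ε)⁻¹ = (exp ε - 1) * (exp ε + 1) / exp ε := by field_simp; ring
    have h1 : exp ε - 1 ≠ 0 := by linarith
    simp only [c, w]
    rw [hpow ε, hpow (-ε)]
    simp only [mul_neg, exp_neg, hsub]
    field_simp
    ring
  have h2w : (2 * w - 1) * (l * ε) + (l * ε) ^ 2 / 2 =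
      l * (ε * (exp ε - 1) / (exp ε + 1)) + l ^ 2 * ε ^ 2 / 2 := by
    simp only [w]; field_simp; ring
  have := mul_exp_add_one_sub_mul_exp_neg_le (h := l * ε) hw0 hw1
  rw [h2w] at this
  unfold lossMGFBound
  linarith

lemma le_exp_add_exp_neg_mul_mul_rpow {R l : ℝ} (hR : 0 ≤ R) (hl : 0 ≤ l) (t : ℝ) :
    R ≤ exp t + exp (-(l * t)) * R ^ (1 + l) := by
  rcases le_or_gt R (exp t) with hRt | hRt
  · have : 0 ≤ exp (-(l * t)) * R ^ (1 + l) := by positivity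
    linarith
  · have hR0 : 0 < R := (exp_pos t).trans hRt
    have hone : 1 ≤ (R / exp t) ^ l := one_le_rpow ((one_le_div (exp_pos t)).2 hRt.le) hl
    calc R ≤ R * (R / exp t) ^ l := le_mul_of_one_le_right hR hone
      _ = exp (-(l * t)) * R ^ (1 + l) := by
        rw [div_rpow hR (exp_pos t).le, ← exp_mul, rpow_add hR0, rpow_one, exp_neg, mul_comm t l]
        field_simp
      _ ≤ exp t + exp (-(l * t)) * R ^ (1 + l) := le_add_of_nonneg_left (exp_pos t).le

lemma exists_exp_neg_mul_mul_lossMGFBound_pow_le {ε δ' : ℝ} (hε : 0 < ε) (hδ' : 0 < δ') {k : ℕ}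
    (hk : k ≠ 0) : ∃ l : ℝ, 0 ≤ l ∧
      exp (-(l * (sqrt (2 * k * log (1 / δ')) * ε + k * ε * (exp ε - 1) / (exp ε + 1)))) *
        lossMGFBound ε l ^ k ≤ δ' := by
  rcases le_or_gt 1 δ' with h1 | h1
  · exact ⟨0, le_rfl, by simpa [lossMGFBound] using h1⟩
  set L := log (1 / δ')
  have hL : 0 < L := log_pos (one_lt_one_div hδ' h1)
  have hk' : (0 : ℝ) < k := Nat.cast_pos.2 (Nat.pos_of_ne_zero hk)
  refine ⟨sqrt (2 * L / k) / ε, by positivity, ?_⟩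
  have hsq : sqrt (2 * L / k) * sqrt (2 * k * L) = 2 * L := by
    rw [← sqrt_mul (by positivity), show 2 * L / k * (2 * k * L) = (2 * L) ^ 2 by field_simp,
      sqrt_sq (by positivity)]
  have hsq' : sqrt (2 * L / k) ^ 2 = 2 * L / k := sq_sqrt (by positivity)
  have hexp : -(sqrt (2 * L / k) / ε *
        (sqrt (2 * k * L) * ε + k * ε * (exp ε - 1) / (exp ε + 1))) +
      k * (sqrt (2 * L / k) / ε * (ε * (exp ε - 1) / (exp ε + 1)) +
        (sqrt (2 * L / k) / ε) ^ 2 * ε ^ 2 / 2) = -L := by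
    generalize sqrt (2 * L / k) = a at hsq hsq' ⊢
    generalize sqrt (2 * k * L) = b at hsq ⊢
    have : (exp ε + 1) ≠ 0 := by positivity
    calc _ = -(a * b) + k * a ^ 2 / 2 := by field_simp; ring
      _ = -L := by rw [hsq, hsq']; field_simp; ring
  rw [lossMGFBound, ← exp_nat_mul, ← exp_add, hexp, exp_neg, exp_log (by positivity), inv_div,
    div_one]

lemma Finset.prod_add_le_prod_add_sum {ι R : Type*} [DecidableEq ι] [CommSemiring R]
    [PartialOrder R] [CanonicallyOrderedAdd R] [IsOrderedRing R] (s : Finset ι) (m u : ι → R) :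
    ∏ i ∈ s, (m i + u i) ≤ ∏ i ∈ s, m i + ∑ i ∈ s, u i * ∏ j ∈ s.erase i, (m j + u j) := by
  induction s using Finset.induction_on with
  | empty => simp
  | insert a s ha ih =>
    have herase : ∀ i ∈ s, ∏ j ∈ (insert a s).erase i, (m j + u j) =
        (m a + u a) * ∏ j ∈ s.erase i, (m j + u j) := fun i hi => by
      rw [Finset.erase_insert_of_ne (by rintro rfl; exact ha hi),
        Finset.prod_insert (fun h => ha (Finset.mem_of_mem_erase h))]
    rw [Finset.prod_insert ha, Finset.prod_insert ha, Finset.sum_insert ha, Finset.erase_insert ha,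
      Finset.sum_congr rfl fun i hi => by rw [herase i hi], add_mul]
    calc m a * ∏ i ∈ s, (m i + u i) + u a * ∏ i ∈ s, (m i + u i)
        ≤ m a * (∏ i ∈ s, m i + ∑ i ∈ s, u i * ∏ j ∈ s.erase i, (m j + u j)) +
            u a * ∏ i ∈ s, (m i + u i) := by gcongr
      _ ≤ m a * ∏ i ∈ s, m i + (u a * ∏ j ∈ s, (m j + u j) +
            ∑ i ∈ s, u i * ((m a + u a) * ∏ j ∈ s.erase i, (m j + u j))) := by
        rw [mul_add, Finset.mul_sum, add_assoc, add_comm (∑ i ∈ s, _)]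
        gcongr _ + (_ + ?_)
        refine Finset.sum_le_sum fun i _ => ?_
        rw [mul_left_comm]
        gcongr
        exact le_self_add

lemma ENNReal.mul_min_le_min {A B x y : ℝ≥0∞} (hAB : A * B = 1) (hB : 1 ≤ B) :
    A * min y (B * x) ≤ min x (B * y) := by
  have hA : A ≤ 1 := by
    calc A = A * 1 := (mul_one A).symm
      _ ≤ A * B := by gcongr
      _ = 1 := hAB
  refine le_min ?_ ?_
  · calc A * min y (B * x) ≤ A * (B * x) := by gcongr; exact min_le_right _ _
      _ = x := by rw [← mul_assoc, hAB, one_mul]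
  · calc A * min y (B * x) ≤ 1 * y := by gcongr; exact min_le_left _ _
      _ ≤ B * y := by gcongr

section Densities

variable {Z : Type*} [MeasurableSpace Z] {μ : Measure Z}

lemma lintegral_ofReal_rpow_one_add_mul_le {r : Z → ℝ} {g : Z → ℝ≥0∞} (hr : Measurable r)
    (hg : Measurable g) {ε l : ℝ} (hε : 0 < ε) (hl : 0 ≤ l)
    (hr_mem : ∀ z, r z ∈ Icc (exp (-ε)) (exp ε))
    (hmean : ∫⁻ z, ENNReal.ofReal (r z) * g z ∂μ ≤ ∫⁻ z, g z ∂μ) (hg1 : ∫⁻ z, g z ∂μ ≤ 1) :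
    ∫⁻ z, ENNReal.ofReal (r z ^ (1 + l)) * g z ∂μ ≤ ENNReal.ofReal (lossMGFBound ε l) := by
  obtain ⟨c, hc, hcK⟩ := exists_affine_majorant_rpow_one_add hε hl
  have hK : 0 ≤ lossMGFBound ε l := (exp_pos _).le
  have hr0 : ∀ z, 0 ≤ r z := fun z => (exp_pos _).le.trans (hr_mem z).1
  have hpt : ∀ z, ENNReal.ofReal (r z ^ (1 + l)) + ENNReal.ofReal c ≤
      ENNReal.ofReal (lossMGFBound ε l) + ENNReal.ofReal c * ENNReal.ofReal (r z) := fun z => by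
    rw [← ENNReal.ofReal_add (rpow_nonneg (hr0 z) _) hc, ← ENNReal.ofReal_mul hc,
      ← ENNReal.ofReal_add hK (mul_nonneg hc (hr0 z))]
    exact ENNReal.ofReal_le_ofReal (hcK _ (hr_mem z))
  have hfin : ENNReal.ofReal c * ∫⁻ z, g z ∂μ ≠ ∞ :=
    ENNReal.mul_ne_top ENNReal.ofReal_ne_top (ne_top_of_le_ne_top ENNReal.one_ne_top hg1)
  have key : ∫⁻ z, ENNReal.ofReal (r z ^ (1 + l)) * g z ∂μ + ENNReal.ofReal c * ∫⁻ z, g z ∂μ ≤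
      ENNReal.ofReal (lossMGFBound ε l) * ∫⁻ z, g z ∂μ + ENNReal.ofReal c * ∫⁻ z, g z ∂μ :=
    calc _ = ∫⁻ z, (ENNReal.ofReal (r z ^ (1 + l)) + ENNReal.ofReal c) * g z ∂μ := by
          simp_rw [add_mul]
          rw [lintegral_add_left (by fun_prop), lintegral_const_mul _ hg]
      _ ≤ ∫⁻ z, (ENNReal.ofReal (lossMGFBound ε l) + ENNReal.ofReal c * ENNReal.ofReal (r z)) *
            g z ∂μ :=
          lintegral_mono fun z => mul_le_mul_left (hpt z) _
      _ = ENNReal.ofReal (lossMGFBound ε l) * ∫⁻ z, g z ∂μ +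
            ENNReal.ofReal c * ∫⁻ z, ENNReal.ofReal (r z) * g z ∂μ := by
          simp_rw [add_mul, mul_assoc]
          rw [lintegral_add_left (by fun_prop), lintegral_const_mul _ hg,
            lintegral_const_mul _ (by fun_prop)]
      _ ≤ _ := by gcongr
  calc _ ≤ ENNReal.ofReal (lossMGFBound ε l) * ∫⁻ z, g z ∂μ :=
        (ENNReal.add_le_add_iff_right hfin).1 key
    _ ≤ ENNReal.ofReal (lossMGFBound ε l) := mul_le_of_le_one_right' hg1

lemma lintegral_tsub_mul_le {p q : Z → ℝ≥0∞} (hp : Measurable p) (hq : Measurable q)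
    {c d : ℝ≥0∞} (hc : c ≠ ∞) (hq_fin : ∫⁻ z, q z ∂μ ≠ ∞)
    (h : ∀ E, MeasurableSet E → ∫⁻ z in E, p z ∂μ ≤ c * ∫⁻ z in E, q z ∂μ + d) :
    ∫⁻ z, p z - c * q z ∂μ ≤ d := by
  set T := {z | c * q z < p z}
  have hT : MeasurableSet T := measurableSet_lt (hq.const_mul c) hp
  have hsupp : (fun z => p z - c * q z).support ⊆ T := fun z hz =>
    lt_of_not_ge fun hle => hz (tsub_eq_zero_of_le hle)
  have hfin : c * ∫⁻ z in T, q z ∂μ ≠ ∞ :=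
    ENNReal.mul_ne_top hc (ne_top_of_le_ne_top hq_fin (setLIntegral_le_lintegral _ _))
  have hsplit : ∫⁻ z in T, p z - c * q z ∂μ + c * ∫⁻ z in T, q z ∂μ = ∫⁻ z in T, p z ∂μ := by
    rw [← lintegral_const_mul _ hq, ← lintegral_add_right _ (hq.const_mul c)]
    exact setLIntegral_congr_fun hT fun z hz => tsub_add_cancel_of_le hz.le
  rw [← setLIntegral_eq_of_support_subset hsupp, ← ENNReal.add_le_add_iff_right hfin, hsplit,
    add_comm d]
  exact h T hT

lemma exists_le_le_lintegral_eq {f g : Z → ℝ≥0∞} (hf : Measurable f) (hg : Measurable g)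
    (hfg : f ≤ g) (hg_fin : ∫⁻ z, g z ∂μ ≠ ∞) {T : ℝ≥0∞} (hfT : ∫⁻ z, f z ∂μ ≤ T)
    (hTg : T ≤ ∫⁻ z, g z ∂μ) :
    ∃ h : Z → ℝ≥0∞, Measurable h ∧ f ≤ h ∧ h ≤ g ∧ ∫⁻ z, h z ∂μ = T := by
  have hf_fin : ∫⁻ z, f z ∂μ ≠ ∞ := ne_top_of_le_ne_top hg_fin (lintegral_mono hfg)
  set D := ∫⁻ z, g z ∂μ - ∫⁻ z, f z ∂μ
  set c := (T - ∫⁻ z, f z ∂μ) / D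
  have hTD : T - ∫⁻ z, f z ∂μ ≤ D := tsub_le_tsub_right hTg _
  have hc1 : c ≤ 1 := ENNReal.div_le_of_le_mul (by rwa [one_mul])
  have hcD : c * D = T - ∫⁻ z, f z ∂μ := by
    rcases eq_or_ne D 0 with hD | hD
    · rw [hD, mul_zero, eq_comm, ← nonpos_iff_eq_zero, ← hD]
      exact hTD
    · exact ENNReal.div_mul_cancel hD (ne_top_of_le_ne_top hg_fin tsub_le_self)
  refine ⟨fun z => f z + c * (g z - f z), by fun_prop, fun z => le_self_add, fun z => ?_, ?_⟩
  · calc f z + c * (g z - f z) ≤ f z + 1 * (g z - f z) := by gcongr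
      _ = g z := by rw [one_mul, add_tsub_cancel_of_le (hfg z)]
  · rw [lintegral_add_left hf, lintegral_const_mul (f := fun z => g z - f z) _ (hg.sub hf),
      lintegral_sub hf hf_fin (Filter.Eventually.of_forall hfg), hcD, add_tsub_cancel_of_le hfT]

lemma exists_ratio_mem_Icc {f g : Z → ℝ≥0∞} (hf : Measurable f) (hg : Measurable g)
    (hg_top : ∀ z, g z ≠ ∞) {a b : ℝ} (ha : 0 ≤ a) (hab : a ≤ b)
    (hlow : ∀ z, ENNReal.ofReal a * g z ≤ f z) (hup : ∀ z, f z ≤ ENNReal.ofReal b * g z) :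
    ∃ r : Z → ℝ, Measurable r ∧ ∀ z, r z ∈ Icc a b ∧ f z = ENNReal.ofReal (r z) * g z := by
  classical
  refine ⟨fun z => if g z = 0 then a else (f z / g z).toReal,
    Measurable.ite (measurableSet_eq_fun hg measurable_const) measurable_const
      (hf.div hg).ennreal_toReal, fun z => ?_⟩
  dsimp only
  split_ifs with hz
  · refine ⟨⟨le_rfl, hab⟩, ?_⟩
    simpa [hz] using hup z
  · have hlo : ENNReal.ofReal a ≤ f z / g z :=
      (ENNReal.le_div_iff_mul_le (.inl hz) (.inl (hg_top z))).2 (hlow z)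
    have hhi : f z / g z ≤ ENNReal.ofReal b :=
      (ENNReal.div_le_iff_le_mul (.inl hz) (.inl (hg_top z))).2 (hup z)
    have hfin : f z / g z ≠ ∞ := ne_top_of_le_ne_top ENNReal.ofReal_ne_top hhi
    refine ⟨⟨(ENNReal.ofReal_le_iff_le_toReal hfin).1 hlo,
      ENNReal.toReal_le_of_le_ofReal (ha.trans hab) hhi⟩, ?_⟩
    rw [ENNReal.ofReal_toReal hfin, ENNReal.div_mul_cancel hz (hg_top z)]

lemma lintegral_sub_lintegral_min {p q : Z → ℝ≥0∞} (hp : Measurable p) (hq : Measurable q)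
    (hp_fin : ∫⁻ z, p z ∂μ ≠ ∞) :
    ∫⁻ z, p z ∂μ - ∫⁻ z, min (p z) (q z) ∂μ = ∫⁻ z, p z - q z ∂μ := by
  rw [← lintegral_sub (hp.min hq)
    (ne_top_of_le_ne_top hp_fin (lintegral_mono fun z => min_le_left _ _))
    (Filter.Eventually.of_forall fun z => min_le_left _ _)]
  simp_rw [tsub_min]

lemma exists_withDensity_eq_of_absolutelyContinuous {P : Measure Z} [SigmaFinite P]
    [P.HaveLebesgueDecomposition μ] (h : P ≪ μ) :
    ∃ f : Z → ℝ≥0∞, Measurable f ∧ (∀ z, f z ≠ ∞) ∧ μ.withDensity f = P := by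
  refine ⟨fun z => (P.rnDeriv μ z).toNNReal,
    (Measure.measurable_rnDeriv P μ).ennreal_toNNReal.coe_nnreal_ennreal,
    fun z => ENNReal.coe_ne_top, ?_⟩
  refine (withDensity_congr_ae ?_).trans (Measure.withDensity_rnDeriv_eq P μ h)
  filter_upwards [Measure.rnDeriv_ne_top P μ] with z hz using ENNReal.coe_toNNReal hz

lemma lintegral_eq_one_of_withDensity_eq {f : Z → ℝ≥0∞} {P : Measure Z} [IsProbabilityMeasure P]
    (h : μ.withDensity f = P) : ∫⁻ z, f z ∂μ = 1 := by
  rw [← setLIntegral_univ, ← withDensity_apply _ MeasurableSet.univ, h, measure_univ]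

/-- `p = ratio • base + excess`: an `ε`-indistinguishable part dominated by `q`, whose privacy loss
is `log ratio`, plus an excess of mass at most `δ`. -/
structure PrivacyLossDecomposition (μ : Measure Z) (p q : Z → ℝ≥0∞) (ε δ : ℝ) where
  base : Z → ℝ≥0∞
  ratio : Z → ℝ
  excess : Z → ℝ≥0∞
  measurable_base : Measurable base
  measurable_ratio : Measurable ratio
  measurable_excess : Measurable excess
  base_le : ∀ z, base z ≤ q z
  ratio_mem : ∀ z, ratio z ∈ Icc (exp (-ε)) (exp ε)
  eq_add : ∀ z, p z = ENNReal.ofReal (ratio z) * base z + excess z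
  lintegral_excess_le : ∫⁻ z, excess z ∂μ ≤ ENNReal.ofReal δ
  lintegral_ratio_mul_base_le : ∫⁻ z, ENNReal.ofReal (ratio z) * base z ∂μ ≤ ∫⁻ z, base z ∂μ

lemma nonempty_privacyLossDecomposition {p q : Z → ℝ≥0∞} (hp : Measurable p) (hq : Measurable q)
    (hq_top : ∀ z, q z ≠ ∞) (hpq_int : ∫⁻ z, p z ∂μ ≤ ∫⁻ z, q z ∂μ) (hq_fin : ∫⁻ z, q z ∂μ ≠ ∞)
    {ε δ : ℝ} (hε : 0 ≤ ε)
    (hpq : ∫⁻ z, p z - ENNReal.ofReal (exp ε) * q z ∂μ ≤ ENNReal.ofReal δ)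
    (hqp : ∫⁻ z, q z - ENNReal.ofReal (exp ε) * p z ∂μ ≤ ENNReal.ofReal δ) :
    Nonempty (PrivacyLossDecomposition μ p q ε δ) := by
  set B := ENNReal.ofReal (exp ε)
  set A := ENNReal.ofReal (exp (-ε))
  have hAB : A * B = 1 := by
    rw [← ENNReal.ofReal_mul (exp_pos _).le, ← exp_add, neg_add_cancel, exp_zero,
      ENNReal.ofReal_one]
  have hA1 : A ≤ 1 := ENNReal.ofReal_le_one.2 (exp_le_one_iff.2 (by linarith))
  have hB1 : 1 ≤ B := ENNReal.one_le_ofReal.2 (one_le_exp hε)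
  have hp_fin : ∫⁻ z, p z ∂μ ≠ ∞ := ne_top_of_le_ne_top hq_fin hpq_int
  set m₀ := fun z => min (p z) (B * q z)
  set qt := fun z => min (q z) (B * p z)
  have hm₀ : Measurable m₀ := hp.min (hq.const_mul B)
  have hqt : Measurable qt := hq.min (hp.const_mul B)
  have hAqt : ∀ z, A * qt z ≤ m₀ z := fun z => ENNReal.mul_min_le_min hAB hB1
  have hm₀B : ∀ z, m₀ z ≤ B * qt z := fun z =>
    calc m₀ z = B * (A * m₀ z) := by rw [← mul_assoc, mul_comm B, hAB, one_mul]
      _ ≤ B * qt z := by gcongr; exact ENNReal.mul_min_le_min hAB hB1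
  have hqt_le : ∀ z, qt z ≤ q z := fun z => min_le_left _ _
  have hm₀_le : ∀ z, m₀ z ≤ p z := fun z => min_le_left _ _
  have hm₀_fin : ∫⁻ z, m₀ z ∂μ ≠ ∞ := ne_top_of_le_ne_top hp_fin (lintegral_mono hm₀_le)
  have hAqt_int : ∫⁻ z, A * qt z ∂μ ≤ min (∫⁻ z, m₀ z ∂μ) (∫⁻ z, qt z ∂μ) :=
    le_min (lintegral_mono hAqt) ((lintegral_const_mul _ hqt).trans_le (mul_le_of_le_one_left' hA1))
  -- lower `m₀` towards `A * qt` until its mass is at most that of `qt`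
  obtain ⟨mt, hmt, hlow, hhigh, hmt_int⟩ :=
    exists_le_le_lintegral_eq (hqt.const_mul A) hm₀ hAqt hm₀_fin hAqt_int (min_le_left _ _)
  obtain ⟨r, hr, hr'⟩ := exists_ratio_mem_Icc hmt hqt
    (fun z => ne_top_of_le_ne_top (hq_top z) (hqt_le z)) (exp_pos _).le
    (exp_le_exp.2 (by linarith)) hlow fun z => (hhigh z).trans (hm₀B z)
  have hmt_p : ∀ z, mt z ≤ p z := fun z => (hhigh z).trans (hm₀_le z)
  refine ⟨⟨qt, r, fun z => p z - mt z, hqt, hr, hp.sub hmt, hqt_le, fun z => (hr' z).1,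
    fun z => ?_, ?_, ?_⟩⟩
  · rw [← (hr' z).2, add_tsub_cancel_of_le (hmt_p z)]
  · rw [lintegral_sub hmt (ne_top_of_le_ne_top hm₀_fin (lintegral_mono hhigh))
      (Filter.Eventually.of_forall hmt_p), hmt_int]
    rcases min_choice (∫⁻ z, m₀ z ∂μ) (∫⁻ z, qt z ∂μ) with h | h <;> rw [h]
    · rw [lintegral_sub_lintegral_min hp (hq.const_mul B) hp_fin]
      exact hpq
    · calc ∫⁻ z, p z ∂μ - ∫⁻ z, qt z ∂μ ≤ ∫⁻ z, q z ∂μ - ∫⁻ z, qt z ∂μ :=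
            tsub_le_tsub_right hpq_int _
        _ = ∫⁻ z, q z - B * p z ∂μ := lintegral_sub_lintegral_min hq (hp.const_mul B) hq_fin
        _ ≤ ENNReal.ofReal δ := hqp
  · rw [lintegral_congr fun z => ((hr' z).2).symm, hmt_int]
    exact min_le_right _ _

lemma exists_privacyLossDecomposition {P Q : Measure Z} [IsProbabilityMeasure P]
    [IsProbabilityMeasure Q] {ε δ : ℝ} (hε : 0 ≤ ε)
    (hPQ : ∀ F, MeasurableSet F → P F ≤ ENNReal.ofReal (exp ε) * Q F + ENNReal.ofReal δ)
    (hQP : ∀ F, MeasurableSet F → Q F ≤ ENNReal.ofReal (exp ε) * P F + ENNReal.ofReal δ) :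
    ∃ p q : Z → ℝ≥0∞, Measurable p ∧ Measurable q ∧ (P + Q).withDensity p = P ∧
      (P + Q).withDensity q = Q ∧ Nonempty (PrivacyLossDecomposition (P + Q) p q ε δ) := by
  obtain ⟨p, hp, -, hpP⟩ := exists_withDensity_eq_of_absolutelyContinuous (μ := P + Q)
    (Measure.absolutelyContinuous_of_le (Measure.le_add_right le_rfl))
  obtain ⟨q, hq, hq_top, hqQ⟩ := exists_withDensity_eq_of_absolutelyContinuous (μ := P + Q)
    (Measure.absolutelyContinuous_of_le (Measure.le_add_left le_rfl))
  have hp1 := lintegral_eq_one_of_withDensity_eq hpP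
  have hq1 := lintegral_eq_one_of_withDensity_eq hqQ
  have hset : ∀ F, MeasurableSet F →
      ∫⁻ z in F, p z ∂(P + Q) = P F ∧ ∫⁻ z in F, q z ∂(P + Q) = Q F := fun F hF => by
    rw [← withDensity_apply _ hF, ← withDensity_apply _ hF, hpP, hqQ]
    exact ⟨rfl, rfl⟩
  refine ⟨p, q, hp, hq, hpP, hqQ, nonempty_privacyLossDecomposition hp hq hq_top
    (hp1.trans hq1.symm).le (hq1 ▸ ENNReal.one_ne_top) hε ?_ ?_⟩
  · refine lintegral_tsub_mul_le hp hq ENNReal.ofReal_ne_top (hq1 ▸ ENNReal.one_ne_top)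
      fun F hF => ?_
    rw [(hset F hF).1, (hset F hF).2]
    exact hPQ F hF
  · refine lintegral_tsub_mul_le hq hp ENNReal.ofReal_ne_top (hp1 ▸ ENNReal.one_ne_top)
      fun F hF => ?_
    rw [(hset F hF).1, (hset F hF).2]
    exact hQP F hF

end Densities

section Pi

variable {ι : Type*} [Fintype ι] {Y : ι → Type*} [∀ i, MeasurableSpace (Y i)]
  (μ : ∀ i, Measure (Y i)) [∀ i, SigmaFinite (μ i)]

lemma lmarginal_prod [DecidableEq ι] {f : ∀ i, Y i → ℝ≥0∞} (hf : ∀ i, Measurable (f i))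
    (s : Finset ι) (x : ∀ i, Y i) :
    (∫⋯∫⁻_s, (fun y => ∏ i, f i (y i)) ∂μ) x =
      (∏ i ∈ s, ∫⁻ t, f i t ∂μ i) * ∏ i ∈ sᶜ, f i (x i) := by
  induction s using Finset.induction_on generalizing x with
  | empty => simp
  | insert a s ha ih =>
    have hmeas : Measurable fun y : ∀ i, Y i => ∏ i, f i (y i) := by fun_prop
    have hcompl : sᶜ = insert a (insert a s)ᶜ := by
      rw [Finset.compl_insert, Finset.insert_erase (Finset.mem_compl.2 ha)]
    have hnot : a ∉ (insert a s)ᶜ := fun h => Finset.mem_compl.1 h (Finset.mem_insert_self a s)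
    rw [lmarginal_insert _ hmeas ha]
    simp_rw [ih, hcompl, Finset.prod_insert hnot, Function.update_self]
    have hupd : ∀ xᵢ, ∏ j ∈ (insert a s)ᶜ, f j (Function.update x a xᵢ j) =
        ∏ j ∈ (insert a s)ᶜ, f j (x j) := fun xᵢ =>
      Finset.prod_congr rfl fun j hj => by rw [Function.update_of_ne (by rintro rfl; exact hnot hj)]
    simp_rw [hupd]
    rw [lintegral_const_mul _ ((hf a).mul_const _), lintegral_mul_const _ (hf a),
      Finset.prod_insert ha]
    ring

lemma lintegral_pi_prod {f : ∀ i, Y i → ℝ≥0∞} (hf : ∀ i, Measurable (f i)) :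
    ∫⁻ y, ∏ i, f i (y i) ∂Measure.pi μ = ∏ i, ∫⁻ t, f i t ∂μ i := by
  classical
  cases isEmpty_or_nonempty (∀ i, Y i) with
  | inl h =>
    obtain ⟨i, hi⟩ := isEmpty_pi.1 h
    rw [Finset.prod_eq_zero (Finset.mem_univ i) (by simp)]
    simp
  | inr h =>
    obtain ⟨x⟩ := h
    rw [lintegral_eq_lmarginal_univ x, lmarginal_prod μ hf]
    simp

lemma pi_eq_withDensity {P : ∀ i, Measure (Y i)} [∀ i, SigmaFinite (P i)]
    {f : ∀ i, Y i → ℝ≥0∞} (hf : ∀ i, Measurable (f i)) (hP : ∀ i, (μ i).withDensity (f i) = P i) :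
    Measure.pi P = (Measure.pi μ).withDensity fun y => ∏ i, f i (y i) := by
  refine Measure.pi_eq fun s hs => ?_
  have hind : (univ.pi s).indicator (fun y => ∏ i, f i (y i)) =
      fun y => ∏ i, (s i).indicator (f i) (y i) := by
    ext y
    by_cases hy : y ∈ univ.pi s
    · simp [hy, indicator_of_mem (hy _ (mem_univ _))]
    · obtain ⟨i, hi⟩ : ∃ i, y i ∉ s i := by simpa using hy
      rw [indicator_of_notMem hy,
        Finset.prod_eq_zero (Finset.mem_univ i) (indicator_of_notMem hi _)]
  rw [withDensity_apply _ (MeasurableSet.univ_pi hs),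
    ← lintegral_indicator (MeasurableSet.univ_pi hs), hind,
    lintegral_pi_prod μ fun i => (hf i).indicator (hs i)]
  simp [lintegral_indicator (hs _), ← withDensity_apply _ (hs _), hP]

lemma lintegral_pi_mul_prod_erase [DecidableEq ι] {f : ∀ i, Y i → ℝ≥0∞} (hf : ∀ i, Measurable (f i))
    (i : ι) {g : Y i → ℝ≥0∞} (hg : Measurable g) :
    ∫⁻ y, g (y i) * ∏ j ∈ Finset.univ.erase i, f j (y j) ∂Measure.pi μ =
      (∫⁻ t, g t ∂μ i) * ∏ j ∈ Finset.univ.erase i, ∫⁻ t, f j t ∂μ j := by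
  have hoff : ∀ j ∈ Finset.univ.erase i, Function.update f i g j = f j := fun j hj =>
    Function.update_of_ne (Finset.ne_of_mem_erase hj) _ _
  have hupd : ∀ j, Measurable (Function.update f i g j) := fun j => by
    rcases eq_or_ne j i with rfl | hj
    · simpa using hg
    · simpa [hj] using hf j
  calc ∫⁻ y, g (y i) * ∏ j ∈ Finset.univ.erase i, f j (y j) ∂Measure.pi μ
      = ∫⁻ y, ∏ j, Function.update f i g j (y j) ∂Measure.pi μ := by
        refine lintegral_congr fun y => ?_
        rw [← Finset.mul_prod_erase _ _ (Finset.mem_univ i), Function.update_self]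
        exact congrArg _ (Finset.prod_congr rfl fun j hj => by rw [hoff j hj])
    _ = _ := by
        rw [lintegral_pi_prod μ hupd, ← Finset.mul_prod_erase _ _ (Finset.mem_univ i),
          Function.update_self]
        exact congrArg _ (Finset.prod_congr rfl fun j hj => by rw [hoff j hj])

lemma setLIntegral_pi_prod_add_le {m u : ∀ i, Y i → ℝ≥0∞} (hm : ∀ i, Measurable (m i))
    (hu : ∀ i, Measurable (u i)) (h1 : ∀ i, ∫⁻ t, m i t + u i t ∂μ i ≤ 1) (E : Set (∀ i, Y i)) :
    ∫⁻ y in E, ∏ i, (m i (y i) + u i (y i)) ∂Measure.pi μ ≤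
      ∫⁻ y in E, ∏ i, m i (y i) ∂Measure.pi μ + ∑ i, ∫⁻ t, u i t ∂μ i := by
  classical
  have hterm : ∀ i, ∫⁻ y, u i (y i) * ∏ j ∈ Finset.univ.erase i, (m j (y j) + u j (y j))
      ∂Measure.pi μ ≤ ∫⁻ t, u i t ∂μ i := fun i => by
    rw [lintegral_pi_mul_prod_erase μ (f := fun j t => m j t + u j t) (fun j => (hm j).add (hu j))
      i (hu i)]
    exact mul_le_of_le_one_right' (Finset.prod_le_one' fun j _ => h1 j)
  calc ∫⁻ y in E, ∏ i, (m i (y i) + u i (y i)) ∂Measure.pi μ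
      ≤ ∫⁻ y in E, (∏ i, m i (y i) + ∑ i, u i (y i) *
          ∏ j ∈ Finset.univ.erase i, (m j (y j) + u j (y j))) ∂Measure.pi μ :=
        lintegral_mono fun y => Finset.prod_add_le_prod_add_sum _ _ _
    _ ≤ ∫⁻ y in E, ∏ i, m i (y i) ∂Measure.pi μ + ∑ i, ∫⁻ y, u i (y i) *
          ∏ j ∈ Finset.univ.erase i, (m j (y j) + u j (y j)) ∂Measure.pi μ := by
        rw [lintegral_add_left (by fun_prop), ← lintegral_finsetSum _ fun i _ => by fun_prop]
        gcongr
        exact Measure.restrict_le_self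
    _ ≤ _ := by gcongr with i; exact hterm i

lemma setLIntegral_pi_prod_ofReal_mul_le {r : ∀ i, Y i → ℝ} {g : ∀ i, Y i → ℝ≥0∞}
    (hr : ∀ i, Measurable (r i)) (hg : ∀ i, Measurable (g i)) (hr0 : ∀ i z, 0 ≤ r i z)
    {l : ℝ} (hl : 0 ≤ l) (t : ℝ) (E : Set (∀ i, Y i)) :
    ∫⁻ y in E, ∏ i, ENNReal.ofReal (r i (y i)) * g i (y i) ∂Measure.pi μ ≤
      ENNReal.ofReal (exp t) * ∫⁻ y in E, ∏ i, g i (y i) ∂Measure.pi μ +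
        ENNReal.ofReal (exp (-(l * t))) *
          ∏ i, ∫⁻ z, ENNReal.ofReal (r i z ^ (1 + l)) * g i z ∂μ i := by
  have hpt : ∀ y : ∀ i, Y i, ∏ i, ENNReal.ofReal (r i (y i)) * g i (y i) ≤
      ENNReal.ofReal (exp t) * ∏ i, g i (y i) +
        ENNReal.ofReal (exp (-(l * t))) *
          ∏ i, ENNReal.ofReal (r i (y i) ^ (1 + l)) * g i (y i) := by
    intro y
    have hR : 0 ≤ ∏ i, r i (y i) := Finset.prod_nonneg fun i _ => hr0 i _
    rw [Finset.prod_mul_distrib, Finset.prod_mul_distrib,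
      ← ENNReal.ofReal_prod_of_nonneg fun i _ => hr0 i _,
      ← ENNReal.ofReal_prod_of_nonneg fun i _ => rpow_nonneg (hr0 i _) _,
      Real.finsetProd_rpow _ _ (fun i _ => hr0 i _), ← mul_assoc, ← add_mul,
      ← ENNReal.ofReal_mul (exp_pos _).le, ← ENNReal.ofReal_add (exp_pos _).le (by positivity)]
    gcongr
    exact le_exp_add_exp_neg_mul_mul_rpow hR hl t
  calc ∫⁻ y in E, ∏ i, ENNReal.ofReal (r i (y i)) * g i (y i) ∂Measure.pi μ
      ≤ ∫⁻ y in E, (ENNReal.ofReal (exp t) * ∏ i, g i (y i) +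
        ENNReal.ofReal (exp (-(l * t))) * ∏ i, ENNReal.ofReal (r i (y i) ^ (1 + l)) * g i (y i))
          ∂Measure.pi μ := lintegral_mono hpt
    _ ≤ ENNReal.ofReal (exp t) * ∫⁻ y in E, ∏ i, g i (y i) ∂Measure.pi μ +
        ENNReal.ofReal (exp (-(l * t))) *
          ∫⁻ y, ∏ i, ENNReal.ofReal (r i (y i) ^ (1 + l)) * g i (y i) ∂Measure.pi μ := by
      rw [lintegral_add_left (by fun_prop), lintegral_const_mul _ (by fun_prop),
        lintegral_const_mul _ (by fun_prop)]
      gcongr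
      exact Measure.restrict_le_self
    _ = _ := by
      rw [lintegral_pi_prod μ (f := fun i z => ENNReal.ofReal (r i z ^ (1 + l)) * g i z)
        fun i => ((hr i).pow_const _).ennreal_ofReal.mul (hg i)]

lemma setLIntegral_pi_prod_le_of_privacyLossDecomposition {p q : ∀ i, Y i → ℝ≥0∞} {ε δ : ℝ}
    (D : ∀ i, PrivacyLossDecomposition (μ i) (p i) (q i) ε δ)
    (hp1 : ∀ i, ∫⁻ z, p i z ∂μ i ≤ 1) (hq1 : ∀ i, ∫⁻ z, q i z ∂μ i ≤ 1) (hε : 0 < ε)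
    {l : ℝ} (hl : 0 ≤ l) (t : ℝ) (E : Set (∀ i, Y i)) :
    ∫⁻ y in E, ∏ i, p i (y i) ∂Measure.pi μ ≤
      ENNReal.ofReal (exp t) * ∫⁻ y in E, ∏ i, q i (y i) ∂Measure.pi μ +
        (Fintype.card ι * ENNReal.ofReal δ +
          ENNReal.ofReal (exp (-(l * t))) *
            ENNReal.ofReal (lossMGFBound ε l) ^ Fintype.card ι) := by
  have hratio0 : ∀ i z, 0 ≤ (D i).ratio z := fun i z => (exp_pos _).le.trans ((D i).ratio_mem z).1
  have hbase1 : ∀ i, ∫⁻ z, (D i).base z ∂μ i ≤ 1 := fun i =>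
    (lintegral_mono (D i).base_le).trans (hq1 i)
  calc ∫⁻ y in E, ∏ i, p i (y i) ∂Measure.pi μ
      = ∫⁻ y in E, ∏ i, (ENNReal.ofReal ((D i).ratio (y i)) * (D i).base (y i) +
          (D i).excess (y i)) ∂Measure.pi μ := by simp_rw [← (D _).eq_add]
    _ ≤ ∫⁻ y in E, ∏ i, ENNReal.ofReal ((D i).ratio (y i)) * (D i).base (y i) ∂Measure.pi μ +
          ∑ i, ∫⁻ z, (D i).excess z ∂μ i :=
        setLIntegral_pi_prod_add_le μ
          (m := fun i z => ENNReal.ofReal ((D i).ratio z) * (D i).base z)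
          (fun i => ((D i).measurable_ratio.ennreal_ofReal.mul
          (D i).measurable_base)) (fun i => (D i).measurable_excess)
          (fun i => by simpa only [← (D i).eq_add] using hp1 i) E
    _ ≤ (ENNReal.ofReal (exp t) * ∫⁻ y in E, ∏ i, (D i).base (y i) ∂Measure.pi μ +
          ENNReal.ofReal (exp (-(l * t))) * ∏ i, ∫⁻ z, ENNReal.ofReal ((D i).ratio z ^ (1 + l)) *
            (D i).base z ∂μ i) + ∑ _i : ι, ENNReal.ofReal δ := by
        gcongr ?_ + ?_
        · exact setLIntegral_pi_prod_ofReal_mul_le μ (fun i => (D i).measurable_ratio)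
            (fun i => (D i).measurable_base) hratio0 hl t E
        · exact Finset.sum_le_sum fun i _ => (D i).lintegral_excess_le
    _ ≤ (ENNReal.ofReal (exp t) * ∫⁻ y in E, ∏ i, q i (y i) ∂Measure.pi μ +
          ENNReal.ofReal (exp (-(l * t))) * ∏ _i : ι, ENNReal.ofReal (lossMGFBound ε l)) +
            ∑ _i : ι, ENNReal.ofReal δ := by
        gcongr with y i _ i _
        · exact (D i).base_le _
        · exact lintegral_ofReal_rpow_one_add_mul_le (D i).measurable_ratio (D i).measurable_base
            hε hl (D i).ratio_mem (D i).lintegral_ratio_mul_base_le (hbase1 i)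
    _ = _ := by
        rw [Finset.prod_const, Finset.sum_const, Finset.card_univ, nsmul_eq_mul]
        ring

end Pi

lemma pi_apply_le_exp_mul_pi_apply_add {ι : Type*} [Fintype ι] {Y : ι → Type*}
    [∀ i, MeasurableSpace (Y i)] {P Q : ∀ i, Measure (Y i)} [∀ i, IsProbabilityMeasure (P i)]
    [∀ i, IsProbabilityMeasure (Q i)] {ε δ δ' : ℝ} (hε : 0 < ε) (hδ : 0 ≤ δ) (hδ' : 0 < δ')
    (hPQ : ∀ i F, MeasurableSet F → P i F ≤ ENNReal.ofReal (exp ε) * Q i F + ENNReal.ofReal δ)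
    (hQP : ∀ i F, MeasurableSet F → Q i F ≤ ENNReal.ofReal (exp ε) * P i F + ENNReal.ofReal δ)
    {E : Set (∀ i, Y i)} (hE : MeasurableSet E) :
    Measure.pi P E ≤
      ENNReal.ofReal (exp (sqrt (2 * Fintype.card ι * log (1 / δ')) * ε +
        Fintype.card ι * ε * (exp ε - 1) / (exp ε + 1))) * Measure.pi Q E +
      ENNReal.ofReal (Fintype.card ι * δ + δ') := by
  rcases isEmpty_or_nonempty ι with hι | hι
  · simp [Subsingleton.elim P Q]
  choose p q hp hq hpP hqQ hD using fun i => exists_privacyLossDecomposition hε.le (hPQ i) (hQP i)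
  obtain ⟨l, hl, hlδ'⟩ :=
    exists_exp_neg_mul_mul_lossMGFBound_pow_le hε hδ' (Fintype.card_ne_zero (α := ι))
  rw [pi_eq_withDensity _ hp hpP, pi_eq_withDensity _ hq hqQ, withDensity_apply _ hE,
    withDensity_apply _ hE]
  refine (setLIntegral_pi_prod_le_of_privacyLossDecomposition _ (fun i => (hD i).some)
    (fun i => (lintegral_eq_one_of_withDensity_eq (hpP i)).le)
    (fun i => (lintegral_eq_one_of_withDensity_eq (hqQ i)).le) hε hl
    (sqrt (2 * Fintype.card ι * log (1 / δ')) * ε + Fintype.card ι * ε * (exp ε - 1) / (exp ε + 1))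
    E).trans ?_
  rw [ENNReal.ofReal_add (by positivity) hδ'.le, ENNReal.ofReal_mul (Nat.cast_nonneg _),
    ENNReal.ofReal_natCast, ← ENNReal.ofReal_pow (show 0 ≤ lossMGFBound ε l from (exp_pos _).le),
    ← ENNReal.ofReal_mul (exp_pos _).le]
  gcongr

lemma ENNReal.le_ofReal_mul_add_ofReal_iff {a b : ℝ≥0∞} (ha : a ≠ ∞) (hb : b ≠ ∞) {c d : ℝ}
    (hc : 0 ≤ c) (hd : 0 ≤ d) :
    a ≤ ENNReal.ofReal c * b + ENNReal.ofReal d ↔ a.toReal ≤ c * b.toReal + d := by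
  rw [← ENNReal.ofReal_toReal hb, ← ENNReal.ofReal_mul hc, ← ENNReal.ofReal_add (by positivity) hd,
    ENNReal.le_ofReal_iff_toReal_le ha (by positivity), ENNReal.toReal_ofReal ENNReal.toReal_nonneg]

theorem stmt16_general {n k : ℕ} {𝒳 : Type*} {Y : Fin k → Type*} [∀ i, MeasurableSpace (Y i)]
    (M : ∀ i : Fin k, (Fin n → 𝒳) → Measure (Y i))
    (hprob : ∀ i S, IsProbabilityMeasure (M i S))
    (ε δ : ℝ) (hε : 0 < ε) (hδ : 0 ≤ δ)
    (hDP : ∀ i : Fin k, ∀ S S' : Fin n → 𝒳, (∃ j, ∀ i', i' ≠ j → S i' = S' i') →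
      ∀ E : Set (Y i), MeasurableSet E →
        (M i S E).toReal ≤ Real.exp ε * (M i S' E).toReal + δ)
    (δ' : ℝ) (hδ' : 0 < δ') :
    ∀ S S' : Fin n → 𝒳, (∃ j, ∀ i', i' ≠ j → S i' = S' i') →
      ∀ E : Set (∀ i, Y i), MeasurableSet E →
        ((Measure.pi fun i => M i S) E).toReal ≤
          Real.exp (Real.sqrt (2 * k * Real.log (1 / δ')) * ε +
              k * ε * (Real.exp ε - 1) / (Real.exp ε + 1)) *
            ((Measure.pi fun i => M i S') E).toReal + (k * δ + δ') := by
  intro S S' hSS' E hE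
  have hdp : ∀ T T' : Fin n → 𝒳, (∃ j, ∀ i', i' ≠ j → T i' = T' i') → ∀ i F, MeasurableSet F →
      M i T F ≤ ENNReal.ofReal (exp ε) * M i T' F + ENNReal.ofReal δ := fun T T' hT i F hF =>
    (ENNReal.le_ofReal_mul_add_ofReal_iff (measure_ne_top _ _) (measure_ne_top _ _) (exp_pos _).le
      hδ).2 (hDP i T T' hT F hF)
  have hS'S : ∃ j, ∀ i', i' ≠ j → S' i' = S i' :=
    hSS'.imp fun j hj i' hi' => (hj i' hi').symm
  have key := pi_apply_le_exp_mul_pi_apply_add hε hδ hδ' (hdp S S' hSS') (hdp S' S hS'S) hE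
  rw [Fintype.card_fin] at key
  exact (ENNReal.le_ofReal_mul_add_ofReal_iff (measure_ne_top _ _) (measure_ne_top _ _)
    (exp_pos _).le (by positivity)).1 key

/-- advanced composition: If each of `k` independent mechanisms
`M_1,…,M_k` (viewed as Markov kernels `S ↦ M_i(S)`) is `(ε,δ)`-differentially private
with `ε < 1/√k`, then the composed mechanism `S ↦ (M_1(S),…,M_k(S))` (the product
measure) is `(ε', kδ + δ')`-differentially private, where
`ε' = √(2k·ln(1/δ'))·ε + kε·(e^ε − 1)/(e^ε + 1)`, for every `δ' > 0`. -/
theorem stmt16 {n k : ℕ} {𝒳 : Type*} {Y : Fin k → Type*} [∀ i, MeasurableSpace (Y i)]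
    (M : ∀ i : Fin k, (Fin n → 𝒳) → Measure (Y i))
    (hprob : ∀ i S, IsProbabilityMeasure (M i S))
    (ε δ : ℝ) (hε : 0 < ε) (hδ : 0 ≤ δ) (hεk : ε < 1 / Real.sqrt k)
    (hDP : ∀ i : Fin k, ∀ S S' : Fin n → 𝒳, (∃ j, ∀ i', i' ≠ j → S i' = S' i') →
      ∀ E : Set (Y i), MeasurableSet E →
        (M i S E).toReal ≤ Real.exp ε * (M i S' E).toReal + δ)
    (δ' : ℝ) (hδ' : 0 < δ') :
    ∀ S S' : Fin n → 𝒳, (∃ j, ∀ i', i' ≠ j → S i' = S' i') →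
      ∀ E : Set (∀ i, Y i), MeasurableSet E →
        ((Measure.pi fun i => M i S) E).toReal ≤
          Real.exp (Real.sqrt (2 * k * Real.log (1 / δ')) * ε +
              k * ε * (Real.exp ε - 1) / (Real.exp ε + 1)) *
            ((Measure.pi fun i => M i S') E).toReal + (k * δ + δ') :=
  stmt16_general M hprob ε δ hε hδ hDP δ' hδ'
end
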